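/- Let ρ be a density matrix on ℂ^d⊗ℂ^d with Schmidt number at most r, and |Φ⁺⟩ = (1/√d)Σ_m|mm⟩ the maximally entangled state. Then ⟨Φ⁺|ρ|Φ⁺⟩ ≤ r/d. Consequently, if ⟨Φ⁺|ρ|Φ⁺⟩ > r/d, then ρ has Schmidt number at least r+1. -/

import Mathlib

/-! A pure state `ψ` of Schmidt rank at most `r`, read as the `d × d` matrix `ψ (m, n)`, has all
its columns in a subspace `U` of dimension at most `r`, and `⟨Φ⁺|ψ⟩ = tr ψ / √d`. Expanding the
columns in an orthonormal basis of `U`, Cauchy–Schwarz gives `|tr ψ|² ≤ dim U · ‖ψ‖² ≤ r`, so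
`|⟨Φ⁺|ψ⟩|² ≤ r / d`. For a mixed state, `⟨Φ⁺|ρ|Φ⁺⟩` is a convex combination of such pure-state
fidelities. -/

open Matrix
open scoped ComplexOrder

/-- A pure state `ψ` on `ℂ^d ⊗ ℂ^d` has Schmidt rank at most `r` if it can be written
as a sum of `r` product terms. -/
def SchmidtRankLE (d r : ℕ) (ψ : Fin d × Fin d → ℂ) : Prop :=
  ∃ a b : Fin r → Fin d → ℂ, ∀ p : Fin d × Fin d, ψ p = ∑ i : Fin r, a i p.1 * b i p.2

/-- A mixed state `ρ` on `ℂ^d ⊗ ℂ^d` has Schmidt number at most `r` if it admits a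
decomposition into pure states each of Schmidt rank at most `r`. -/
def SchmidtNumberLE (d r : ℕ) (ρ : Matrix (Fin d × Fin d) (Fin d × Fin d) ℂ) : Prop :=
  ∃ (N : ℕ) (p : Fin N → ℝ) (ψ : Fin N → (Fin d × Fin d → ℂ)),
    (∀ i, 0 ≤ p i) ∧
    (∀ i, star (ψ i) ⬝ᵥ ψ i = 1) ∧
    (∀ i, SchmidtRankLE d r (ψ i)) ∧
    ρ = ∑ i : Fin N, ((p i : ℂ)) • Matrix.vecMulVec (ψ i) (star (ψ i))

open Module Submodule

theorem norm_sum_mul_sq_le {R ι : Type*} [NormedRing R] (s : Finset ι) (f g : ι → R) :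
    ‖∑ i ∈ s, f i * g i‖ ^ 2 ≤ (∑ i ∈ s, ‖f i‖ ^ 2) * ∑ i ∈ s, ‖g i‖ ^ 2 := calc
  ‖∑ i ∈ s, f i * g i‖ ^ 2 ≤ (∑ i ∈ s, ‖f i‖ * ‖g i‖) ^ 2 := by
    gcongr
    exact (norm_sum_le _ _).trans (Finset.sum_le_sum fun i _ => norm_mul_le _ _)
  _ ≤ _ := Finset.sum_mul_sq_le_sq_mul_sq _ _ _

theorem norm_sum_inner_sq_le_finrank_mul {𝕜 E ι : Type*} [RCLike 𝕜] [NormedAddCommGroup E]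
    [InnerProductSpace 𝕜 E] [Fintype ι] {e : ι → E} (he : Orthonormal 𝕜 e)
    (U : Submodule 𝕜 E) [FiniteDimensional 𝕜 U] (y : ι → U) :
    ‖∑ n, inner 𝕜 (e n) (y n : E)‖ ^ 2 ≤ finrank 𝕜 U * ∑ n, ‖y n‖ ^ 2 := by
  let v := stdOrthonormalBasis 𝕜 U
  have expand : ∀ n, inner 𝕜 (e n) (y n : E) =
      ∑ j, inner 𝕜 (e n) (v j : E) * inner 𝕜 (v j) (y n) := fun n => by
    conv_lhs => rw [← v.sum_repr' (y n)]
    simp [inner_sum, inner_smul_right, mul_comm]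
  have bessel : ∀ j, ∑ n, ‖inner 𝕜 (e n) (v j : E)‖ ^ 2 ≤ 1 := fun j => by
    have hv : ‖(v j : E)‖ = 1 := v.orthonormal.1 j
    simpa [norm_inner_symm, hv] using he.sum_inner_products_le (s := Finset.univ) (v j : E)
  calc ‖∑ n, inner 𝕜 (e n) (y n : E)‖ ^ 2
      = ‖∑ q : ι × Fin _, inner 𝕜 (e q.1) (v q.2 : E) * inner 𝕜 (v q.2) (y q.1)‖ ^ 2 := by
        simp only [expand, Fintype.sum_prod_type]
    _ ≤ (∑ q : ι × Fin _, ‖inner 𝕜 (e q.1) (v q.2 : E)‖ ^ 2) *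
          ∑ q : ι × Fin _, ‖inner 𝕜 (v q.2) (y q.1)‖ ^ 2 :=
        norm_sum_mul_sq_le _ _ _
    _ ≤ finrank 𝕜 U * ∑ n, ‖y n‖ ^ 2 := by
        rw [Fintype.sum_prod_type_right, Fintype.sum_prod_type]
        simp only [v.sum_sq_norm_inner_right]
        gcongr
        exact (Finset.sum_le_sum fun j _ => bessel j).trans (by simp)

theorem SchmidtRankLE.norm_sum_diag_sq_le {d r : ℕ} {ψ : Fin d × Fin d → ℂ}
    (h : SchmidtRankLE d r ψ) : ‖∑ m, ψ (m, m)‖ ^ 2 ≤ r * ∑ p, ‖ψ p‖ ^ 2 := by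
  obtain ⟨a, b, hab⟩ := h
  let U : Submodule ℂ (EuclideanSpace ℂ (Fin d)) :=
    span ℂ (Set.range fun i => WithLp.toLp 2 (a i))
  have column_mem : ∀ n, WithLp.toLp 2 (fun m => ψ (m, n)) ∈ U := fun n => by
    have : WithLp.toLp 2 (fun m => ψ (m, n)) = ∑ i, b i n • WithLp.toLp 2 (a i) := by
      ext m; simp [hab, mul_comm]
    rw [this]
    exact sum_mem fun i _ => smul_mem _ _ (subset_span ⟨i, rfl⟩)
  have hU : finrank ℂ U ≤ r := (finrank_range_le_card _).trans (by simp)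
  have key := norm_sum_inner_sq_le_finrank_mul (EuclideanSpace.basisFun (Fin d) ℂ).orthonormal U
    fun n => ⟨_, column_mem n⟩
  simp only [EuclideanSpace.basisFun_inner, Submodule.coe_norm, EuclideanSpace.norm_sq_eq] at key
  rw [Fintype.sum_prod_type_right]
  exact key.trans (by gcongr)

theorem star_dotProduct_self_eq_sum_norm_sq {n : Type*} [Fintype n] (v : n → ℂ) :
    star v ⬝ᵥ v = ((∑ i, ‖v i‖ ^ 2 : ℝ) : ℂ) := by
  simp [dotProduct, Complex.conj_mul']

theorem re_star_dotProduct_sum_smul_vecMulVec_mulVec {ι n : Type*} [Fintype ι] [Fintype n]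
    (p : ι → ℝ) (ψ : ι → n → ℂ) (Φ : n → ℂ) :
    (star Φ ⬝ᵥ (∑ i, (p i : ℂ) • vecMulVec (ψ i) (star (ψ i))) *ᵥ Φ).re =
      ∑ i, p i * ‖star Φ ⬝ᵥ ψ i‖ ^ 2 := by
  have term : ∀ i, star Φ ⬝ᵥ ((p i : ℂ) • vecMulVec (ψ i) (star (ψ i))) *ᵥ Φ =
      ((p i * ‖star Φ ⬝ᵥ ψ i‖ ^ 2 : ℝ) : ℂ) := fun i => by
    simp [smul_mulVec, vecMulVec_mulVec, star_dotProduct (ψ i), Complex.conj_mul']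
  simp_rw [sum_mulVec, dotProduct_sum, term, ← Complex.ofReal_sum, Complex.ofReal_re]

theorem trace_sum_smul_vecMulVec {ι n : Type*} [Fintype ι] [Fintype n]
    (p : ι → ℝ) (ψ : ι → n → ℂ) (hψ : ∀ i, star (ψ i) ⬝ᵥ ψ i = 1) :
    (∑ i, (p i : ℂ) • vecMulVec (ψ i) (star (ψ i))).trace = ∑ i, p i := by
  simp [trace_sum, dotProduct_comm _ (star _), hψ]

theorem star_dotProduct_eq_of_maximallyEntangled {d : ℕ} {Φ : Fin d × Fin d → ℂ}
    (hΦ : ∀ p : Fin d × Fin d, Φ p = if p.1 = p.2 then ((1 / Real.sqrt d : ℝ) : ℂ) else 0)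
    (ψ : Fin d × Fin d → ℂ) :
    star Φ ⬝ᵥ ψ = ((1 / Real.sqrt d : ℝ) : ℂ) * ∑ m, ψ (m, m) := by
  simp [dotProduct, hΦ, Fintype.sum_prod_type, Finset.mul_sum, apply_ite (starRingEnd ℂ)]

theorem SchmidtRankLE.norm_star_dotProduct_sq_le {d r : ℕ} {Φ ψ : Fin d × Fin d → ℂ}
    (hΦ : ∀ p : Fin d × Fin d, Φ p = if p.1 = p.2 then ((1 / Real.sqrt d : ℝ) : ℂ) else 0)
    (hψ : star ψ ⬝ᵥ ψ = 1) (h : SchmidtRankLE d r ψ) :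
    ‖star Φ ⬝ᵥ ψ‖ ^ 2 ≤ r / d := by
  have hnorm : ∑ p, ‖ψ p‖ ^ 2 = 1 := by
    exact_mod_cast (star_dotProduct_self_eq_sum_norm_sq ψ).symm.trans hψ
  have hdiag := h.norm_sum_diag_sq_le
  rw [hnorm, mul_one] at hdiag
  rw [star_dotProduct_eq_of_maximallyEntangled hΦ, norm_mul, mul_pow, Complex.norm_real,
    Real.norm_eq_abs, sq_abs, div_pow, Real.sq_sqrt (Nat.cast_nonneg d), one_pow,
    one_div_mul_eq_div]
  gcongr

theorem stmt_11_general (d r : ℕ)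
    (Φ : Fin d × Fin d → ℂ)
    (hΦ : ∀ p : Fin d × Fin d,
      Φ p = if p.1 = p.2 then ((1 / Real.sqrt d : ℝ) : ℂ) else 0)
    (ρ : Matrix (Fin d × Fin d) (Fin d × Fin d) ℂ)
    (htr : ρ.trace = 1) :
    (SchmidtNumberLE d r ρ → (star Φ ⬝ᵥ ρ *ᵥ Φ).re ≤ (r : ℝ) / d) ∧
    ((r : ℝ) / d < (star Φ ⬝ᵥ ρ *ᵥ Φ).re → ¬ SchmidtNumberLE d r ρ) := by
  have bound : SchmidtNumberLE d r ρ → (star Φ ⬝ᵥ ρ *ᵥ Φ).re ≤ r / d := by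
    rintro ⟨N, p, ψ, hp, hψ, hrank, rfl⟩
    have hsum : ∑ i, p i = 1 := by
      exact_mod_cast (trace_sum_smul_vecMulVec p ψ hψ).symm.trans htr
    rw [re_star_dotProduct_sum_smul_vecMulVec_mulVec]
    calc ∑ i, p i * ‖star Φ ⬝ᵥ ψ i‖ ^ 2 ≤ ∑ i, p i * (r / d) :=
          Finset.sum_le_sum fun i _ => mul_le_mul_of_nonneg_left
            ((hrank i).norm_star_dotProduct_sq_le hΦ (hψ i)) (hp i)
      _ = r / d := by rw [← Finset.sum_mul, hsum, one_mul]
  exact ⟨bound, fun hlt h => (bound h).not_gt hlt⟩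

theorem stmt_11 (d r : ℕ) (hd : 0 < d)
    (Φ : Fin d × Fin d → ℂ)
    (hΦ : ∀ p : Fin d × Fin d,
      Φ p = if p.1 = p.2 then ((1 / Real.sqrt d : ℝ) : ℂ) else 0)
    (ρ : Matrix (Fin d × Fin d) (Fin d × Fin d) ℂ)
    (hρ : ρ.PosSemidef) (htr : ρ.trace = 1) :
    (SchmidtNumberLE d r ρ → (star Φ ⬝ᵥ ρ *ᵥ Φ).re ≤ (r : ℝ) / d) ∧
    ((r : ℝ) / d < (star Φ ⬝ᵥ ρ *ᵥ Φ).re → ¬ SchmidtNumberLE d r ρ) :=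
  stmt_11_general d r Φ hΦ ρ htr
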